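/- Let (V, E, s, t) be a finite graph with 1-chains C₁ = (E → ZMod 2), boundary ∂, and cycle space Z₁ = ker ∂. Let B : C₁ → C₁ → ZMod 2 be an alternating bilinear form, and let q : Z₁ → ZMod 2 satisfy q(x+y) = q(x) + q(y) + B x y for all x, y ∈ Z₁. In the polynomial ring ℤ[X_e : e ∈ E], define the twisted partition function Z_q = Σ_{ξ ∈ Z₁} χ(q ξ)·x(|ξ|). Then Z_q² = Σ_{ξ ∈ Z₁} χ(q ξ) · Σ_{Y ⊆ E, Y ∩ |ξ| = ∅} ( Σ_{(ξ₁,ξ₂) ∈ Z(ξ,Y)} χ(B ξ₁ ξ₂) ) · x(|ξ|)·x(Y)², where Z(ξ,Y) = {(ξ₁,ξ₂) ∈ Z₁ × Z₁ : ξ₁ + ξ₂ = ξ and |ξ₁| ∩ |ξ₂| = Y}. -/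
import Mathlib


open scoped BigOperators

/-- The boundary map `∂ : C₁ → C₀` of a finite graph `(V, E, s, t)`:
the `ZMod 2`-linear map sending the indicator chain of an edge `e` to
(indicator of `s e`) + (indicator of `t e`). -/
def bdry {V E : Type*} [Fintype E] [DecidableEq V]
    (s t : E → V) (ξ : E → ZMod 2) : V → ZMod 2 :=
  fun v => ∑ e, ξ e * ((if s e = v then 1 else 0) + (if t e = v then 1 else 0))

/-- The support of a 1-chain: the set of edges where it equals 1. -/
def chainSupp {E : Type*} [Fintype E] (ξ : E → ZMod 2) : Finset E :=
  Finset.univ.filter (fun e => ξ e = 1)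

/-- The sign character `χ : ZMod 2 → ℤ`, `χ 0 = 1`, `χ 1 = -1`. -/
def chi : ZMod 2 → ℤ := fun x => if x = 0 then 1 else -1

/-- The monomial `x(S) = ∏_{e ∈ S} X_e` in `ℤ[X_e : e ∈ E]`. -/
noncomputable def xmon {E : Type*} (S : Finset E) : MvPolynomial E ℤ :=
  ∏ e ∈ S, MvPolynomial.X e

set_option linter.unusedSectionVars false
section Aux
variable {V E : Type*} [Fintype V] [Fintype E] [DecidableEq V] [DecidableEq E]

lemma bdry_add (s t : E → V) (x y : E → ZMod 2) :
    bdry s t (x + y) = bdry s t x + bdry s t y := by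
  funext v
  simp [bdry, add_mul, Finset.sum_add_distrib]

lemma chi_add (a b : ZMod 2) : chi (a + b) = chi a * chi b := by revert a b; decide

lemma chainSupp_add (x y : E → ZMod 2) :
    chainSupp (x + y) = (chainSupp x \ chainSupp y) ∪ (chainSupp y \ chainSupp x) := by
  ext e
  have h : ∀ a b : ZMod 2, (a + b = 1) ↔ ((a = 1 ∧ ¬ b = 1) ∨ (b = 1 ∧ ¬ a = 1)) := by decide
  simp [chainSupp, h (x e) (y e)]

lemma xmon_union {S T : Finset E} (h : Disjoint S T) :
    xmon (S ∪ T) = xmon S * xmon T := by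
  rw [xmon, xmon, xmon, Finset.prod_union h]

lemma xmon_mul (x y : E → ZMod 2) :
    xmon (chainSupp x) * xmon (chainSupp y)
      = xmon (chainSupp (x + y)) * xmon (chainSupp x ∩ chainSupp y) ^ 2 := by
  set S := chainSupp x
  set T := chainSupp y
  have h1 : xmon S = xmon (S \ T) * xmon (S ∩ T) := by
    rw [← xmon_union (Finset.disjoint_sdiff_inter S T), Finset.sdiff_union_inter]
  have h2 : xmon T = xmon (T \ S) * xmon (S ∩ T) := by
    rw [Finset.inter_comm, ← xmon_union (Finset.disjoint_sdiff_inter T S),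
      Finset.sdiff_union_inter]
  rw [chainSupp_add, xmon_union disjoint_sdiff_sdiff, h1, h2]
  ring
end Aux

section Collapse
variable {V E : Type*} [Fintype V] [Fintype E] [DecidableEq V] [DecidableEq E]

lemma fiber_collapse1 (s t : E → V) (ξ : E → ZMod 2) {M : Type*} [AddCommMonoid M]
    (f : (E → ZMod 2) × (E → ZMod 2) → Finset E → M) :
    ∑ Y ∈ Finset.univ.filter (fun Y : Finset E => Y ∩ chainSupp ξ = ∅),
      ∑ p ∈ Finset.univ.filter
          (fun p : (E → ZMod 2) × (E → ZMod 2) =>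
            bdry s t p.1 = 0 ∧ bdry s t p.2 = 0 ∧ p.1 + p.2 = ξ ∧
              chainSupp p.1 ∩ chainSupp p.2 = Y), f p Y
    = ∑ p ∈ Finset.univ.filter
          (fun p : (E → ZMod 2) × (E → ZMod 2) =>
            bdry s t p.1 = 0 ∧ bdry s t p.2 = 0 ∧ p.1 + p.2 = ξ),
        f p (chainSupp p.1 ∩ chainSupp p.2) := by
  have hempty : ∀ Y ∈ (Finset.univ : Finset (Finset E)),
      Y ∉ Finset.univ.filter (fun Y : Finset E => Y ∩ chainSupp ξ = ∅) →
      (∑ p ∈ Finset.univ.filter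
          (fun p : (E → ZMod 2) × (E → ZMod 2) =>
            bdry s t p.1 = 0 ∧ bdry s t p.2 = 0 ∧ p.1 + p.2 = ξ ∧
              chainSupp p.1 ∩ chainSupp p.2 = Y), f p Y) = 0 := by
    intro Y _ hY
    simp only [Finset.mem_filter, Finset.mem_univ, true_and] at hY
    have hset : ∀ p ∈ (Finset.univ : Finset ((E → ZMod 2) × (E → ZMod 2))),
        ¬ (bdry s t p.1 = 0 ∧ bdry s t p.2 = 0 ∧ p.1 + p.2 = ξ ∧
            chainSupp p.1 ∩ chainSupp p.2 = Y) := by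
      rintro p - ⟨h1, h2, h3, h4⟩
      apply hY
      ext e
      simp only [Finset.mem_inter, Finset.notMem_empty, iff_false, not_and]
      intro heY heξ
      rw [← h4, Finset.mem_inter] at heY
      have e1 : p.1 e = 1 := by simpa [chainSupp] using heY.1
      have e2 : p.2 e = 1 := by simpa [chainSupp] using heY.2
      have e3 : ξ e = 1 := by simpa [chainSupp] using heξ
      rw [← h3, Pi.add_apply, e1, e2] at e3
      exact absurd e3 (by decide)
    rw [Finset.filter_eq_empty_iff.mpr hset, Finset.sum_empty]
  rw [Finset.sum_subset (Finset.filter_subset _ _) hempty]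
  have hre : ∀ Y : Finset E,
      (Finset.univ.filter
        (fun p : (E → ZMod 2) × (E → ZMod 2) =>
          bdry s t p.1 = 0 ∧ bdry s t p.2 = 0 ∧ p.1 + p.2 = ξ ∧
            chainSupp p.1 ∩ chainSupp p.2 = Y))
      = (Finset.univ.filter
          (fun p : (E → ZMod 2) × (E → ZMod 2) =>
            bdry s t p.1 = 0 ∧ bdry s t p.2 = 0 ∧ p.1 + p.2 = ξ)).filter
          (fun p => chainSupp p.1 ∩ chainSupp p.2 = Y) := by
    intro Y
    rw [Finset.filter_filter]
    exact Finset.filter_congr fun p _ => by tauto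
  calc ∑ Y : Finset E, ∑ p ∈ Finset.univ.filter
          (fun p : (E → ZMod 2) × (E → ZMod 2) =>
            bdry s t p.1 = 0 ∧ bdry s t p.2 = 0 ∧ p.1 + p.2 = ξ ∧
              chainSupp p.1 ∩ chainSupp p.2 = Y), f p Y
      = ∑ Y : Finset E, ∑ p ∈ (Finset.univ.filter
          (fun p : (E → ZMod 2) × (E → ZMod 2) =>
            bdry s t p.1 = 0 ∧ bdry s t p.2 = 0 ∧ p.1 + p.2 = ξ)).filter
          (fun p => chainSupp p.1 ∩ chainSupp p.2 = Y),
            f p (chainSupp p.1 ∩ chainSupp p.2) := by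
        refine Finset.sum_congr rfl fun Y _ => ?_
        rw [hre Y]
        refine Finset.sum_congr rfl fun p hp => ?_
        rw [(Finset.mem_filter.mp hp).2]
    _ = _ := Finset.sum_fiberwise _ _ _

lemma fiber_collapse2 (s t : E → V) {M : Type*} [AddCommMonoid M]
    (f : (E → ZMod 2) × (E → ZMod 2) → M) :
    ∑ ξ ∈ Finset.univ.filter (fun ξ : E → ZMod 2 => bdry s t ξ = 0),
      ∑ p ∈ Finset.univ.filter
          (fun p : (E → ZMod 2) × (E → ZMod 2) =>
            bdry s t p.1 = 0 ∧ bdry s t p.2 = 0 ∧ p.1 + p.2 = ξ), f p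
    = ∑ p ∈ Finset.univ.filter
          (fun p : (E → ZMod 2) × (E → ZMod 2) =>
            bdry s t p.1 = 0 ∧ bdry s t p.2 = 0), f p := by
  have hempty : ∀ ξ ∈ (Finset.univ : Finset (E → ZMod 2)),
      ξ ∉ Finset.univ.filter (fun ξ : E → ZMod 2 => bdry s t ξ = 0) →
      (∑ p ∈ Finset.univ.filter
          (fun p : (E → ZMod 2) × (E → ZMod 2) =>
            bdry s t p.1 = 0 ∧ bdry s t p.2 = 0 ∧ p.1 + p.2 = ξ), f p) = 0 := by
    intro ξ _ hξ
    simp only [Finset.mem_filter, Finset.mem_univ, true_and] at hξ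
    have hset : ∀ p ∈ (Finset.univ : Finset ((E → ZMod 2) × (E → ZMod 2))),
        ¬ (bdry s t p.1 = 0 ∧ bdry s t p.2 = 0 ∧ p.1 + p.2 = ξ) := by
      rintro p - ⟨h1, h2, h3⟩
      exact hξ (by rw [← h3, bdry_add, h1, h2, add_zero])
    rw [Finset.filter_eq_empty_iff.mpr hset, Finset.sum_empty]
  rw [Finset.sum_subset (Finset.filter_subset _ _) hempty]
  have hre : ∀ ξ : E → ZMod 2,
      (Finset.univ.filter
        (fun p : (E → ZMod 2) × (E → ZMod 2) =>
          bdry s t p.1 = 0 ∧ bdry s t p.2 = 0 ∧ p.1 + p.2 = ξ))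
      = (Finset.univ.filter
          (fun p : (E → ZMod 2) × (E → ZMod 2) =>
            bdry s t p.1 = 0 ∧ bdry s t p.2 = 0)).filter
          (fun p => p.1 + p.2 = ξ) := by
    intro ξ
    rw [Finset.filter_filter]
    exact Finset.filter_congr fun p _ => by tauto
  simp only [hre]
  exact Finset.sum_fiberwise _ _ _

end Collapse


theorem twisted_partition_function_sq
    {V E : Type*} [Fintype V] [Fintype E] [DecidableEq V] [DecidableEq E]
    (s t : E → V)
    (B : (E → ZMod 2) → (E → ZMod 2) → ZMod 2)
    (hB₁ : ∀ x y z, B (x + y) z = B x z + B y z)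
    (hB₂ : ∀ x y z, B z (x + y) = B z x + B z y)
    (hBalt : ∀ x, B x x = 0)
    (q : (E → ZMod 2) → ZMod 2)
    (hq : ∀ x y : E → ZMod 2, bdry s t x = 0 → bdry s t y = 0 →
      q (x + y) = q x + q y + B x y)
    (Zq : MvPolynomial E ℤ)
    (hZq : Zq = ∑ ξ ∈ Finset.univ.filter (fun ξ : E → ZMod 2 => bdry s t ξ = 0),
      (chi (q ξ) : MvPolynomial E ℤ) * xmon (chainSupp ξ)) :
    Zq ^ 2 = ∑ ξ ∈ Finset.univ.filter (fun ξ : E → ZMod 2 => bdry s t ξ = 0),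
      (chi (q ξ) : MvPolynomial E ℤ) *
        ∑ Y ∈ Finset.univ.filter (fun Y : Finset E => Y ∩ chainSupp ξ = ∅),
          ((∑ p ∈ Finset.univ.filter
              (fun p : (E → ZMod 2) × (E → ZMod 2) =>
                bdry s t p.1 = 0 ∧ bdry s t p.2 = 0 ∧ p.1 + p.2 = ξ ∧
                  chainSupp p.1 ∩ chainSupp p.2 = Y),
            chi (B p.1 p.2) : ℤ) : MvPolynomial E ℤ) *
          (xmon (chainSupp ξ) * xmon Y ^ 2) := by
  classical
  set F : Finset (E → ZMod 2) := Finset.univ.filter (fun ξ => bdry s t ξ = 0) with hF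
  set g : (E → ZMod 2) × (E → ZMod 2) → MvPolynomial E ℤ := fun p =>
    (chi (q (p.1 + p.2)) : MvPolynomial E ℤ) * (chi (B p.1 p.2) : MvPolynomial E ℤ) *
      (xmon (chainSupp (p.1 + p.2)) * xmon (chainSupp p.1 ∩ chainSupp p.2) ^ 2) with hg
  have key : ∀ x y : E → ZMod 2, bdry s t x = 0 → bdry s t y = 0 →
      ((chi (q x) : MvPolynomial E ℤ) * xmon (chainSupp x)) *
        ((chi (q y) : MvPolynomial E ℤ) * xmon (chainSupp y)) = g (x, y) := by
    intro x y hx hy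
    have hq' : q x + q y = q (x + y) + B x y := by
      rw [hq x y hx hy, add_assoc, CharTwo.add_self_eq_zero, add_zero]
    have hc : chi (q x) * chi (q y) = chi (q (x + y)) * chi (B x y) := by
      rw [← chi_add, ← chi_add, hq']
    have hxm := xmon_mul x y
    calc ((chi (q x) : MvPolynomial E ℤ) * xmon (chainSupp x)) *
          ((chi (q y) : MvPolynomial E ℤ) * xmon (chainSupp y))
        = ((chi (q x) * chi (q y) : ℤ) : MvPolynomial E ℤ) *
            (xmon (chainSupp x) * xmon (chainSupp y)) := by push_cast; ring
      _ = ((chi (q (x + y)) * chi (B x y) : ℤ) : MvPolynomial E ℤ) *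
            (xmon (chainSupp (x + y)) * xmon (chainSupp x ∩ chainSupp y) ^ 2) := by
            rw [hc, hxm]
      _ = g (x, y) := by rw [hg]; push_cast; ring
  have hL : Zq ^ 2 = ∑ p ∈ F ×ˢ F, g p := by
    rw [hZq, sq, Finset.sum_mul_sum, ← Finset.sum_product']
    refine Finset.sum_congr rfl fun p hp => ?_
    rw [Finset.mem_product] at hp
    exact key p.1 p.2 (Finset.mem_filter.mp hp.1).2 (Finset.mem_filter.mp hp.2).2
  rw [hL]
  have hFF : F ×ˢ F = Finset.univ.filter
      (fun p : (E → ZMod 2) × (E → ZMod 2) => bdry s t p.1 = 0 ∧ bdry s t p.2 = 0) := by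
    ext p
    simp [Finset.mem_product, hF]
  symm
  calc
    ∑ ξ ∈ F, (chi (q ξ) : MvPolynomial E ℤ) *
        ∑ Y ∈ Finset.univ.filter (fun Y : Finset E => Y ∩ chainSupp ξ = ∅),
          ((∑ p ∈ Finset.univ.filter
              (fun p : (E → ZMod 2) × (E → ZMod 2) =>
                bdry s t p.1 = 0 ∧ bdry s t p.2 = 0 ∧ p.1 + p.2 = ξ ∧
                  chainSupp p.1 ∩ chainSupp p.2 = Y),
            chi (B p.1 p.2) : ℤ) : MvPolynomial E ℤ) *
          (xmon (chainSupp ξ) * xmon Y ^ 2)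
      = ∑ ξ ∈ F, ∑ Y ∈ Finset.univ.filter (fun Y : Finset E => Y ∩ chainSupp ξ = ∅),
          ∑ p ∈ Finset.univ.filter
              (fun p : (E → ZMod 2) × (E → ZMod 2) =>
                bdry s t p.1 = 0 ∧ bdry s t p.2 = 0 ∧ p.1 + p.2 = ξ ∧
                  chainSupp p.1 ∩ chainSupp p.2 = Y),
            (chi (q ξ) : MvPolynomial E ℤ) * (chi (B p.1 p.2) : MvPolynomial E ℤ) *
              (xmon (chainSupp ξ) * xmon Y ^ 2) := by
        refine Finset.sum_congr rfl fun ξ _ => ?_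
        rw [Finset.mul_sum]
        refine Finset.sum_congr rfl fun Y _ => ?_
        rw [Int.cast_sum, Finset.sum_mul, Finset.mul_sum]
        exact Finset.sum_congr rfl fun p _ => by ring
    _ = ∑ ξ ∈ F, ∑ p ∈ Finset.univ.filter
              (fun p : (E → ZMod 2) × (E → ZMod 2) =>
                bdry s t p.1 = 0 ∧ bdry s t p.2 = 0 ∧ p.1 + p.2 = ξ),
            (chi (q ξ) : MvPolynomial E ℤ) * (chi (B p.1 p.2) : MvPolynomial E ℤ) *
              (xmon (chainSupp ξ) * xmon (chainSupp p.1 ∩ chainSupp p.2) ^ 2) :=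
        Finset.sum_congr rfl fun ξ _ => fiber_collapse1 s t ξ
          (fun p Y => (chi (q ξ) : MvPolynomial E ℤ) * (chi (B p.1 p.2) : MvPolynomial E ℤ) *
              (xmon (chainSupp ξ) * xmon Y ^ 2))
    _ = ∑ ξ ∈ F, ∑ p ∈ Finset.univ.filter
              (fun p : (E → ZMod 2) × (E → ZMod 2) =>
                bdry s t p.1 = 0 ∧ bdry s t p.2 = 0 ∧ p.1 + p.2 = ξ), g p := by
        refine Finset.sum_congr rfl fun ξ _ => Finset.sum_congr rfl fun p hp => ?_
        obtain ⟨-, -, h3⟩ := (Finset.mem_filter.mp hp).2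
        rw [hg]
        simp only [h3]
    _ = ∑ p ∈ Finset.univ.filter
          (fun p : (E → ZMod 2) × (E → ZMod 2) =>
            bdry s t p.1 = 0 ∧ bdry s t p.2 = 0), g p := fiber_collapse2 s t g
    _ = ∑ p ∈ F ×ˢ F, g p := by rw [hFF]
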